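/- For any distinct x, y ∈ (0,1] and upsets α with threshold (infimum) x and β with threshold y, the α-preservation and β-preservation consequence relations are incomparable: there is an argument valid in one but not the other, and vice versa. -/

import Mathlib

/-- Propositional formulas: atoms, negation, disjunction. -/
inductive Fml : Type
  | atom : ℕ → Fml
  | neg : Fml → Fml
  | or : Fml → Fml → Fml
deriving DecidableEq

namespace Fml

def and (φ ψ : Fml) : Fml := neg (or (neg φ) (neg ψ))

def bot : Fml := and (atom 0) (neg (atom 0))

def imp (φ ψ : Fml) : Fml := or (neg φ) ψ

def eval (v : ℕ → Bool) : Fml → Bool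
  | atom n => v n
  | neg φ => !(eval v φ)
  | or φ ψ => (eval v φ) || (eval v ψ)

end Fml

/-- Two formulas are jointly classically unsatisfiable. -/
def Incompatible (φ ψ : Fml) : Prop :=
  ∀ v : ℕ → Bool, ¬(φ.eval v = true ∧ ψ.eval v = true)

/-- Classical (Set-Set) validity. -/
def ClValid (Γ Δ : Finset Fml) : Prop :=
  ∀ v : ℕ → Bool, (∀ γ ∈ Γ, γ.eval v = true) → ∃ δ ∈ Δ, δ.eval v = true

/-- Classical single-conclusion entailment. -/
def ClEntails (Γ : Finset Fml) (φ : Fml) : Prop :=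
  ∀ v : ℕ → Bool, (∀ γ ∈ Γ, γ.eval v = true) → φ.eval v = true

def ClConsistent (Γ : Finset Fml) : Prop :=
  ∃ v : ℕ → Bool, ∀ γ ∈ Γ, γ.eval v = true

def Tautology (φ : Fml) : Prop := ∀ v : ℕ → Bool, φ.eval v = true

/-- A probability distribution on formulas. -/
structure ProbDist where
  p : Fml → ℝ
  nonneg : ∀ φ, 0 ≤ p φ
  le_one : ∀ φ, p φ ≤ 1
  bot_eq : p Fml.bot = 0
  neg_eq : ∀ φ, p (Fml.neg φ) = 1 - p φ
  add_eq : ∀ φ ψ, Incompatible φ ψ → p (Fml.or φ ψ) = p φ + p ψ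

/-- A probabilistic model: worlds with classical valuations and a finitely
additive probability measure on subsets of worlds. -/
structure PModel where
  W : Type
  nonempty : Nonempty W
  val : W → ℕ → Bool
  μ : Set W → ℝ
  nonneg : ∀ A : Set W, 0 ≤ μ A
  empty_eq : μ (∅ : Set W) = 0
  univ_eq : μ (Set.univ : Set W) = 1
  add_eq : ∀ A B : Set W, Disjoint A B → μ (A ∪ B) = μ A + μ B

/-- Denotation of a formula in a model. -/
def PModel.den (M : PModel) (φ : Fml) : Set M.W := {w | φ.eval (M.val w) = true}

/-- Induced probability of a formula in a model. -/
def PModel.prob (M : PModel) (φ : Fml) : ℝ := M.μ (M.den φ)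

/-- An upset of [0,1]: contains 1, excludes 0, upward closed within [0,1]. -/
def IsUpset (α : Set ℝ) : Prop :=
  α ⊆ Set.Icc 0 1 ∧ (1 : ℝ) ∈ α ∧ (0 : ℝ) ∉ α ∧
    ∀ x ∈ α, ∀ y ∈ Set.Icc (0:ℝ) 1, x ≤ y → y ∈ α

/-- The mirror image of α. -/
def mirror (α : Set ℝ) : Set ℝ := {x ∈ Set.Icc (0:ℝ) 1 | 1 - x ∈ α}

/-- The dual of α. -/
def dual (α : Set ℝ) : Set ℝ := Set.Icc (0:ℝ) 1 \ mirror α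

/-- Conjunction of a finite set of formulas. -/
noncomputable def conj (Γ : Finset Fml) : Fml := Γ.toList.foldr Fml.and (Fml.neg Fml.bot)

/-- Disjunction of a finite set of formulas. -/
noncomputable def disj (Δ : Finset Fml) : Fml := Δ.toList.foldr Fml.or Fml.bot

/-- Disjunction of a list of formulas. -/
def disjList (l : List Fml) : Fml := l.foldr Fml.or Fml.bot

/-- α-preservation validity (over probability distributions). -/
def PresValid (α : Set ℝ) (Γ Δ : Finset Fml) : Prop :=
  ∀ P : ProbDist, (∀ γ ∈ Γ, P.p γ ∈ α) → ∃ δ ∈ Δ, P.p δ ∈ α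

/-- α-preservation validity (over probabilistic models). -/
def PresValidM (α : Set ℝ) (Γ Δ : Finset Fml) : Prop :=
  ∀ M : PModel, (∀ γ ∈ Γ, M.prob γ ∈ α) → ∃ δ ∈ Δ, M.prob δ ∈ α

/-- α-symmetric validity. -/
def SymValid (α : Set ℝ) (Γ Δ : Finset Fml) : Prop :=
  ∀ P : ProbDist, (∀ γ ∈ Γ, P.p γ ∈ α) → ∃ δ ∈ Δ, P.p δ ∉ mirror α

/-- α-satisfiability of a finite set of formulas. -/
def Satis (α : Set ℝ) (Γ : Finset Fml) : Prop :=
  ∃ P : ProbDist, ∀ γ ∈ Γ, P.p γ ∈ α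

/-!
Choose a rational `q = m / N` strictly between the two thresholds. Split the valuations into
`N` cells according to the first true atom, and for `i : Fin N` let `window N m i` be the
disjunction of the cells `j` with `(i + j).val < m` (addition in `Fin N` is cyclic). Every cell
lies in exactly `m` of the `N` windows, so under any probability the window probabilities sum
to `m` and some window has probability at most `q`, while the distribution that is uniform on
the cells gives every window probability exactly `q`. So the windows are `[q, 1]`-satisfiable but
not `(q, 1]`-satisfiable, which separates the two preservation relations in one direction with
premises only; by negation, the windows of size `N - m` separate them in the other direction with
conclusions only.
-/

open Finset

namespace Fml

lemma eval_and (v : ℕ → Bool) (φ ψ : Fml) : (and φ ψ).eval v = (φ.eval v && ψ.eval v) := by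
  simp [and, eval]

lemma eval_bot (v : ℕ → Bool) : bot.eval v = false := by
  simp [bot, eval_and, eval]

end Fml

lemma eval_disjList (v : ℕ → Bool) (l : List Fml) :
    (disjList l).eval v = true ↔ ∃ φ ∈ l, φ.eval v = true := by
  induction l with
  | nil => simp [disjList, Fml.eval_bot]
  | cons φ l ih => simp [disjList, Fml.eval, ← ih]

namespace ProbDist

variable (P : ProbDist)

lemma mono {φ ψ : Fml} (h : ∀ v, φ.eval v = true → ψ.eval v = true) : P.p φ ≤ P.p ψ := by
  have hinc : Incompatible φ (Fml.neg ψ) := fun v ⟨hφ, hψ⟩ => by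
    simp [Fml.eval, h v hφ] at hψ
  have := P.le_one (Fml.or φ (Fml.neg ψ))
  rw [P.add_eq _ _ hinc, P.neg_eq] at this
  linarith

lemma p_eq_one {φ : Fml} (h : Tautology φ) : P.p φ = 1 := by
  have : P.p (Fml.neg φ) ≤ P.p Fml.bot := P.mono fun v hv => by simp [Fml.eval, h v] at hv
  linarith [P.neg_eq φ, P.nonneg (Fml.neg φ), P.bot_eq, P.le_one φ]

lemma p_disjList {l : List Fml} (h : l.Pairwise Incompatible) :
    P.p (disjList l) = (l.map P.p).sum := by
  induction l with
  | nil => simpa [disjList] using P.bot_eq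
  | cons φ l ih =>
    rw [List.pairwise_cons] at h
    have hinc : Incompatible φ (disjList l) := fun v ⟨hφ, hl⟩ => by
      obtain ⟨ψ, hψ, hψv⟩ := (eval_disjList v l).mp hl
      exact h.1 ψ hψ v ⟨hφ, hψv⟩
    rw [List.map_cons, List.sum_cons, ← ih h.2]
    exact P.add_eq _ _ hinc

lemma p_disjList_map {ι : Type*} {θ : ι → Fml}
    (hθ : Pairwise fun i j => Incompatible (θ i) (θ j)) (s : Finset ι) : P.p (disjList (s.toList.map θ)) = ∑ i ∈ s, P.p (θ i) := by
  rw [P.p_disjList, List.map_map, ← Finset.sum_map_toList]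
  · rfl
  · exact List.pairwise_map.mpr (s.nodup_toList.imp fun hij => hθ hij)

lemma sum_eq_one {ι : Type*} [Fintype ι] {θ : ι → Fml}
    (hθ : Pairwise fun i j => Incompatible (θ i) (θ j)) (hcover : ∀ v, ∃ i, (θ i).eval v = true) : ∑ i, P.p (θ i) = 1 := by
  rw [← P.p_disjList_map hθ]
  refine P.p_eq_one fun v => (eval_disjList v _).mpr ?_
  obtain ⟨i, hi⟩ := hcover v
  exact ⟨θ i, List.mem_map.mpr ⟨i, Finset.mem_toList.mpr (mem_univ i), rfl⟩, hi⟩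

end ProbDist

noncomputable def ProbDist.uniform {ι : Type*} [Fintype ι] [Nonempty ι] (w : ι → ℕ → Bool) :
    ProbDist where
  p φ := #{i | φ.eval (w i) = true} / Fintype.card ι
  nonneg φ := by positivity
  le_one φ := div_le_one_of_le₀ (by exact_mod_cast card_filter_le _ _) (by positivity)
  bot_eq := by simp [Fml.eval_bot]
  neg_eq φ := by
    have hsplit := card_filter_add_card_filter_not (s := univ) fun i => φ.eval (w i) = true
    simp only [Bool.not_eq_true, card_univ] at hsplit
    simp only [Fml.eval, Bool.not_eq_eq_eq_not, Bool.not_true]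
    rw [eq_sub_iff_add_eq, ← add_div, ← Nat.cast_add, add_comm, hsplit,
      div_self (Nat.cast_ne_zero.mpr Fintype.card_ne_zero)]
  add_eq φ ψ h := by
    classical
    simp only [Fml.eval, Bool.or_eq_true]
    rw [filter_or, card_union_of_disjoint, Nat.cast_add, add_div]
    exact disjoint_filter.mpr fun i _ hφ hψ => h (w i) ⟨hφ, hψ⟩

def allFalseBelow : ℕ → Fml
  | 0 => Fml.neg Fml.bot
  | j + 1 => Fml.and (allFalseBelow j) (Fml.neg (Fml.atom j))

lemma eval_allFalseBelow (v : ℕ → Bool) (j : ℕ) :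
    (allFalseBelow j).eval v = true ↔ ∀ i < j, v i = false := by
  induction j with
  | zero => simp [allFalseBelow, Fml.eval, Fml.eval_bot]
  | succ j ih =>
    simp only [allFalseBelow, Fml.eval_and, Bool.and_eq_true, ih, Fml.eval, Bool.not_eq_true']
    exact ⟨fun h i hi => (Nat.lt_succ_iff_lt_or_eq.mp hi).elim (h.1 i) (· ▸ h.2),
      fun h => ⟨fun i hi => h i (by omega), h j (by omega)⟩⟩

/-- `cell N j` says that `j` is the first true atom; the last cell collects the valuations
whose first `N - 1` atoms are all false. -/
def cell (N : ℕ) (j : Fin N) : Fml :=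
  if j.val + 1 < N then Fml.and (allFalseBelow j) (Fml.atom j) else allFalseBelow j

lemma eval_cell {N : ℕ} (v : ℕ → Bool) (j : Fin N) :
    (cell N j).eval v = true ↔ (∀ i < j.val, v i = false) ∧ (j.val + 1 < N → v j = true) := by
  unfold cell
  split_ifs with h
  · simp [Fml.eval_and, eval_allFalseBelow, Fml.eval, h]
  · simp [eval_allFalseBelow, h]

lemma cell_incompatible_of_lt {N : ℕ} {j j' : Fin N} (h : j < j') :
    Incompatible (cell N j) (cell N j') := fun v ⟨hj, hj'⟩ => by
  have h' : j.val < j'.val := h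
  have := ((eval_cell v j).mp hj).2 (by omega)
  simp [((eval_cell v j').mp hj').1 j h'] at this

lemma pairwise_incompatible_cell (N : ℕ) :
    Pairwise fun j j' : Fin N => Incompatible (cell N j) (cell N j') := by
  intro j j' hne
  rcases hne.lt_or_gt with h | h
  · exact cell_incompatible_of_lt h
  · exact fun v hv => cell_incompatible_of_lt h v hv.symm

lemma exists_eval_cell (N : ℕ) [NeZero N] (v : ℕ → Bool) :
    ∃ j : Fin N, (cell N j).eval v = true := by
  classical
  have hex : ∃ j, j + 1 < N → v j = true := ⟨N - 1, by omega⟩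
  refine ⟨⟨Nat.find hex, ?_⟩, (eval_cell v _).mpr ⟨fun i hi => ?_, Nat.find_spec hex⟩⟩
  · by_contra! h
    exact Nat.find_min hex (show N - 1 < Nat.find hex by have := NeZero.pos N; omega) (by omega)
  · have := Nat.find_min hex hi
    simp only [Classical.not_imp, Bool.not_eq_true] at this
    exact this.2

lemma eval_cell_indicator {N : ℕ} (j j' : Fin N) :
    (cell N j').eval (fun i => decide (i = j)) = true ↔ j' = j := by
  rw [eval_cell, Fin.ext_iff]
  simp only [decide_eq_false_iff_not, decide_eq_true_eq]
  constructor
  · rintro ⟨hbelow, hat⟩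
    have := hbelow j
    have := j.isLt
    omega
  · intro h
    exact ⟨fun i hi => by omega, fun _ => h⟩

noncomputable def window (N m : ℕ) (i : Fin N) : Fml :=
  disjList (({j : Fin N | (i + j).val < m} : Finset (Fin N)).toList.map (cell N))

section Window

variable {N : ℕ} [NeZero N]

lemma card_filter_add_val_lt {m : ℕ} (hm : m ≤ N) (i : Fin N) :
    #{j : Fin N | (i + j).val < m} = m := by
  rw [card_filter, ← Equiv.sum_comp (Equiv.addLeft i).symm]
  simp [Fin.card_filter_val_lt, hm]

lemma sum_p_window (P : ProbDist) {m : ℕ} (hm : m ≤ N) : ∑ i, P.p (window N m i) = m := by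
  simp only [window, P.p_disjList_map (pairwise_incompatible_cell N), sum_filter]
  rw [sum_comm]
  simp only [← sum_filter, sum_const, add_comm _ (_ : Fin N), card_filter_add_val_lt hm,
    nsmul_eq_mul, ← mul_sum]
  rw [P.sum_eq_one (pairwise_incompatible_cell N) (exists_eval_cell N), mul_one]

lemma exists_p_window_le (P : ProbDist) {m : ℕ} (hm : m ≤ N) :
    ∃ i, P.p (window N m i) ≤ m / N := by
  have hsum : ∑ i, P.p (window N m i) ≤ ∑ _i : Fin N, (m : ℝ) / N := by
    simp [sum_p_window P hm, mul_div_cancel₀ _ (NeZero.ne (N : ℝ))]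
  obtain ⟨i, -, hi⟩ := exists_le_of_sum_le univ_nonempty hsum
  exact ⟨i, hi⟩

variable (N) in
noncomputable def cellUniform : ProbDist :=
  ProbDist.uniform fun j : Fin N => fun k => decide (k = j)

lemma cellUniform_p_window {m : ℕ} (hm : m ≤ N) (i : Fin N) :
    (cellUniform N).p (window N m i) = m / N := by
  have heval (j : Fin N) :
      (window N m i).eval (fun k => decide (k = j)) = true ↔ (i + j).val < m := by
    simp [window, eval_disjList, eval_cell_indicator]
  simp only [cellUniform, ProbDist.uniform, heval, card_filter_add_val_lt hm, Fintype.card_fin]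

end Window

lemma exists_presValid_Ioc_not_presValid_Icc (m N : ℕ) [NeZero N] (hm : m ≤ N) :
    ∃ Γ : Finset Fml, PresValid (Set.Ioc ((m : ℝ) / N) 1) Γ ∅ ∧
      ¬ PresValid (Set.Icc ((m : ℝ) / N) 1) Γ ∅ := by
  refine ⟨univ.image (window N m), fun P hP => ?_, fun hvalid => ?_⟩
  · obtain ⟨i, hi⟩ := exists_p_window_le P hm
    exact absurd (hP _ (mem_image_of_mem _ (mem_univ i))).1 hi.not_gt
  · obtain ⟨_, hδ, -⟩ := hvalid (cellUniform N) fun γ hγ => by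
      obtain ⟨i, -, rfl⟩ := mem_image.mp hγ
      rw [cellUniform_p_window hm]
      exact ⟨le_rfl, div_le_one_of_le₀ (by exact_mod_cast hm) (Nat.cast_nonneg N)⟩
    simp at hδ

lemma exists_presValid_Icc_not_presValid_Ioc (m N : ℕ) [NeZero N] (hm : m ≤ N) :
    ∃ Δ : Finset Fml, PresValid (Set.Icc ((m : ℝ) / N) 1) ∅ Δ ∧
      ¬ PresValid (Set.Ioc ((m : ℝ) / N) 1) ∅ Δ := by
  have hcompl : ((N - m : ℕ) : ℝ) / N = 1 - m / N := by
    rw [Nat.cast_sub hm, sub_div, div_self (NeZero.ne (N : ℝ))]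
  refine ⟨univ.image fun i => Fml.neg (window N (N - m) i), fun P _ => ?_, fun hvalid => ?_⟩
  · obtain ⟨i, hi⟩ := exists_p_window_le P (Nat.sub_le N m)
    refine ⟨_, mem_image_of_mem _ (mem_univ i), ?_, P.le_one _⟩
    rw [P.neg_eq]
    linarith
  · obtain ⟨_, hδ, hmem⟩ := hvalid (cellUniform N) fun γ hγ => by simp at hγ
    obtain ⟨i, -, rfl⟩ := mem_image.mp hδ
    rw [ProbDist.neg_eq, cellUniform_p_window (Nat.sub_le N m), hcompl] at hmem
    linarith [hmem.1]

namespace IsUpset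

variable {α : Set ℝ} (hα : IsUpset α)
include hα

lemma sInf_nonneg : 0 ≤ sInf α :=
  le_csInf ⟨1, hα.2.1⟩ fun _ ha => (hα.1 ha).1

lemma sInf_le_one : sInf α ≤ 1 :=
  csInf_le ⟨0, fun _ ha => (hα.1 ha).1⟩ hα.2.1

lemma Icc_subset {q : ℝ} (hq : sInf α < q) : Set.Icc q 1 ⊆ α := fun t ht => by
  obtain ⟨a, ha, hat⟩ := exists_lt_of_csInf_lt ⟨1, hα.2.1⟩ hq
  exact hα.2.2.2 a ha t ⟨(hα.1 ha).1.trans (hat.trans_le ht.1).le, ht.2⟩ (hat.trans_le ht.1).le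

lemma subset_Ioc {q : ℝ} (hq : q < sInf α) : α ⊆ Set.Ioc q 1 := fun _ ha =>
  ⟨hq.trans_le (csInf_le ⟨0, fun _ hb => (hα.1 hb).1⟩ ha), (hα.1 ha).2⟩

end IsUpset

lemma exists_nat_div_btwn {x y : ℝ} (hx : 0 ≤ x) (hxy : x < y) (hy : y ≤ 1) :
    ∃ m N : ℕ, 0 < N ∧ m ≤ N ∧ x < (m : ℝ) / N ∧ (m : ℝ) / N < y := by
  obtain ⟨q, hxq, hqy⟩ := exists_rat_btwn hxy
  have hnum : ((q.num.toNat : ℕ) : ℝ) = q.num := by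
    exact_mod_cast Int.toNat_of_nonneg (Rat.num_nonneg.mpr (by exact_mod_cast hx.trans hxq.le))
  have hq : (q : ℝ) = (q.num.toNat : ℝ) / q.den := by rw [hnum, Rat.cast_def]
  rw [hq] at hxq hqy
  have hlt : (q.num.toNat : ℝ) < q.den :=
    (div_lt_one (by exact_mod_cast q.pos)).mp (hqy.trans_le hy)
  exact ⟨q.num.toNat, q.den, q.pos, by exact_mod_cast hlt.le, hxq, hqy⟩

section PresValid

variable {S T : Set ℝ} (hST : S ⊆ T)
include hST

lemma PresValid.mono_of_premises_empty {Δ : Finset Fml} (h : PresValid S ∅ Δ) :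
    PresValid T ∅ Δ := fun P _ =>
  let ⟨δ, hδ, hPδ⟩ := h P (by simp)
  ⟨δ, hδ, hST hPδ⟩

lemma PresValid.anti_of_conclusions_empty {Γ : Finset Fml} (h : PresValid T Γ ∅) :
    PresValid S Γ ∅ := fun P hP =>
  let ⟨_, hδ, _⟩ := h P fun γ hγ => hST (hP γ hγ)
  absurd hδ (notMem_empty _)

end PresValid

theorem presValid_incomparable_of_sInf_lt {α β : Set ℝ} (hα : IsUpset α) (hβ : IsUpset β)
    (hlt : sInf α < sInf β) :
    (∃ Γ Δ : Finset Fml, PresValid α Γ Δ ∧ ¬ PresValid β Γ Δ) ∧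
    (∃ Γ Δ : Finset Fml, PresValid β Γ Δ ∧ ¬ PresValid α Γ Δ) := by
  obtain ⟨m, N, hN, hm, hαq, hqβ⟩ := exists_nat_div_btwn hα.sInf_nonneg hlt hβ.sInf_le_one
  have : NeZero N := ⟨hN.ne'⟩
  have hIcc := hα.Icc_subset hαq
  have hIoc := hβ.subset_Ioc hqβ
  obtain ⟨Δ, hΔ, hΔ'⟩ := exists_presValid_Icc_not_presValid_Ioc m N hm
  obtain ⟨Γ, hΓ, hΓ'⟩ := exists_presValid_Ioc_not_presValid_Icc m N hm
  exact ⟨⟨∅, Δ, hΔ.mono_of_premises_empty hIcc, fun h => hΔ' (h.mono_of_premises_empty hIoc)⟩,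
    ⟨Γ, ∅, hΓ.anti_of_conclusions_empty hIoc, fun h => hΓ' (h.anti_of_conclusions_empty hIcc)⟩⟩

theorem stmt14_general (x y : ℝ)
    (hxy : x ≠ y) (α β : Set ℝ) (hα : IsUpset α) (hβ : IsUpset β)
    (hxa : sInf α = x) (hyb : sInf β = y) :
    (∃ Γ Δ : Finset Fml, PresValid α Γ Δ ∧ ¬ PresValid β Γ Δ) ∧
    (∃ Γ Δ : Finset Fml, PresValid β Γ Δ ∧ ¬ PresValid α Γ Δ) := by
  subst hxa hyb
  rcases hxy.lt_or_gt with hlt | hlt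
  · exact presValid_incomparable_of_sInf_lt hα hβ hlt
  · exact (presValid_incomparable_of_sInf_lt hβ hα hlt).symm

/-- upsets with distinct thresholds determine incomparable
preservation consequence relations. -/
theorem stmt14 (x y : ℝ) (hx : x ∈ Set.Ioc (0:ℝ) 1) (hy : y ∈ Set.Ioc (0:ℝ) 1)
    (hxy : x ≠ y) (α β : Set ℝ) (hα : IsUpset α) (hβ : IsUpset β)
    (hxa : sInf α = x) (hyb : sInf β = y) :
    (∃ Γ Δ : Finset Fml, PresValid α Γ Δ ∧ ¬ PresValid β Γ Δ) ∧
    (∃ Γ Δ : Finset Fml, PresValid β Γ Δ ∧ ¬ PresValid α Γ Δ) :=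
  stmt14_general x y hxy α β hα hβ hxa hyb
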